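/- Let α, β ∈ (0,1) and let f₀(x,y) = Σ_{j=1}^{∞} M_j^{−(α+β)} r_j(x) r_j(y) ∈ C(G_m²). Then there is a constant C > 0 (depending only on α, β and the sequence m) such that for every n ∈ ℕ, ω(f₀,1/M_n)_C ≤ C · (1/M_n)^{α+β}; that is, ω(f₀,1/M_n)_C = O((1/M_n)^{α+β}). -/

import Mathlib

open MeasureTheory Filter Finset
open scoped ENNReal NNReal Real

noncomputable section

namespace Vilenkin

/-- The bounded Vilenkin group: complete direct product of the cyclic groups `ZMod (m k)`. -/
abbrev G (m : ℕ → ℕ) : Type := ∀ k, ZMod (m k)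

/-- The generalized number system `M 0 = 1`, `M (k+1) = m k * M k`. -/
def M (m : ℕ → ℕ) : ℕ → ℕ
  | 0 => 1
  | k + 1 => m k * M m k

/-- The cylinder neighbourhood `I n = {x | x 0 = ⋯ = x (n-1) = 0}`. -/
def I (m : ℕ → ℕ) (n : ℕ) : Set (G m) := {x | ∀ j < n, x j = 0}

/-- The `j`-th digit of `n` in the generalized number system based on `m`. -/
def digit (m : ℕ → ℕ) (n j : ℕ) : ℕ := n / M m j % m j

/-- The generalized Rademacher functions `r k x = exp (2 π i x_k / m_k)`. -/
def rad (m : ℕ → ℕ) (k : ℕ) (x : G m) : ℂ :=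
  Complex.exp (2 * Real.pi * Complex.I * ((x k).val : ℂ) / (m k : ℂ))

/-- The Vilenkin system `ψ n = ∏ k, (r k) ^ (n_k)`. -/
def psi (m : ℕ → ℕ) (n : ℕ) (x : G m) : ℂ :=
  ∏ k ∈ Finset.range (n + 1), rad m k x ^ digit m n k

/-- The Vilenkin-Dirichlet kernels `D n = ∑_{k<n} ψ k`. -/
def D (m : ℕ → ℕ) (n : ℕ) (x : G m) : ℂ := ∑ k ∈ Finset.range n, psi m k x

/-- The Cesàro numbers `A n α = (α+1)⋯(α+n)/n!`. -/
def A (α : ℝ) (n : ℕ) : ℝ := (∏ i ∈ Finset.range n, (α + (i + 1))) / (n.factorial : ℝ)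

/-- One-dimensional Vilenkin-Fourier coefficients. -/
def fhat1 (m : ℕ → ℕ) (μ : Measure (G m)) (f : G m → ℂ) (i : ℕ) : ℂ :=
  ∫ x, f x * (starRingEnd ℂ) (psi m i x) ∂μ

/-- One-dimensional `(C,-α)` Cesàro means of the Vilenkin-Fourier series. -/
def cesaro1 (m : ℕ → ℕ) (μ : Measure (G m)) (α : ℝ) (f : G m → ℂ) (n : ℕ) (x : G m) : ℂ :=
  ((A (-α) n : ℝ) : ℂ)⁻¹ *
    ∑ i ∈ Finset.range (n + 1), ((A (-α) (n - i) : ℝ) : ℂ) * fhat1 m μ f i * psi m i x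

/-- Double Vilenkin-Fourier coefficients. -/
def fhat2 (m : ℕ → ℕ) (μ : Measure (G m)) (f : G m × G m → ℂ) (i j : ℕ) : ℂ :=
  ∫ z, f z * (starRingEnd ℂ) (psi m i z.1) * (starRingEnd ℂ) (psi m j z.2) ∂(μ.prod μ)

/-- Rectangular partial sums of the double Vilenkin-Fourier series. -/
def partialSum2 (m : ℕ → ℕ) (μ : Measure (G m)) (f : G m × G m → ℂ) (n₁ n₂ : ℕ)
    (z : G m × G m) : ℂ :=
  ∑ k₁ ∈ Finset.range n₁, ∑ k₂ ∈ Finset.range n₂,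
    fhat2 m μ f k₁ k₂ * psi m k₁ z.1 * psi m k₂ z.2

/-- The `(C,-α,-β)` means of the double Vilenkin-Fourier series. -/
def cesaro2 (m : ℕ → ℕ) (μ : Measure (G m)) (α β : ℝ) (f : G m × G m → ℂ) (n₁ n₂ : ℕ)
    (z : G m × G m) : ℂ :=
  ((A (-α) n₁ * A (-β) n₂ : ℝ) : ℂ)⁻¹ *
    ∑ i ∈ Finset.range (n₁ + 1), ∑ j ∈ Finset.range (n₂ + 1),
      ((A (-α) (n₁ - i) * A (-β) (n₂ - j) : ℝ) : ℂ) * fhat2 m μ f i j * psi m i z.1 * psi m j z.2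

/-- One-dimensional modulus of continuity in `L^p`. -/
def omegaOne (m : ℕ → ℕ) (μ : Measure (G m)) (p : ℝ≥0∞) (f : G m → ℂ) (n : ℕ) : ℝ≥0∞ :=
  ⨆ u ∈ I m n, eLpNorm (fun x => f (x - u) - f x) p μ

/-- First partial modulus of continuity in `L^p`. -/
def omega1 (m : ℕ → ℕ) (μ : Measure (G m)) (p : ℝ≥0∞) (f : G m × G m → ℂ) (n : ℕ) : ℝ≥0∞ :=
  ⨆ u ∈ I m n, eLpNorm (fun z => f (z.1 - u, z.2) - f z) p (μ.prod μ)

/-- Second partial modulus of continuity in `L^p`. -/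
def omega2 (m : ℕ → ℕ) (μ : Measure (G m)) (p : ℝ≥0∞) (f : G m × G m → ℂ) (n : ℕ) : ℝ≥0∞ :=
  ⨆ v ∈ I m n, eLpNorm (fun z => f (z.1, z.2 - v) - f z) p (μ.prod μ)

/-- Mixed modulus of continuity in `L^p`. -/
def omega12 (m : ℕ → ℕ) (μ : Measure (G m)) (p : ℝ≥0∞) (f : G m × G m → ℂ) (n l : ℕ) : ℝ≥0∞ :=
  ⨆ u ∈ I m n, ⨆ v ∈ I m l,
    eLpNorm (fun z => f (z.1 - u, z.2 - v) - f (z.1 - u, z.2) - f (z.1, z.2 - v) + f z) p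
      (μ.prod μ)

/-- Total modulus of continuity in `L^p`. -/
def omegaT (m : ℕ → ℕ) (μ : Measure (G m)) (p : ℝ≥0∞) (f : G m × G m → ℂ) (n : ℕ) : ℝ≥0∞ :=
  ⨆ u ∈ I m n, ⨆ v ∈ I m n, eLpNorm (fun z => f (z.1 - u, z.2 - v) - f z) p (μ.prod μ)

/-- Total modulus of continuity in the uniform norm. -/
def omegaC (m : ℕ → ℕ) (f : G m × G m → ℂ) (n : ℕ) : ℝ≥0∞ :=
  ⨆ u ∈ I m n, ⨆ v ∈ I m n, ⨆ z : G m × G m, (‖f (z.1 - u, z.2 - v) - f z‖₊ : ℝ≥0∞)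


/-!
Only the terms with index `j + 1 ≥ n` can change under a shift by `(u, v) ∈ I n × I n`, since
`r_k(x - u) = r_k(x)` for `k < n`. Each term has modulus `M_{j+1}^{-(α+β)}`, and `M_{n+i} ≥ 2^i M_n`,
so the surviving tail is dominated by `2 M_n^{-(α+β)} ∑ᵢ 2^{-i(α+β)}`.
-/

variable {m : ℕ → ℕ}

lemma two_pow_mul_M_le (hm2 : ∀ k, 2 ≤ m k) (n i : ℕ) : 2 ^ i * M m n ≤ M m (n + i) := by
  induction i with
  | zero => simp
  | succ i ih =>
    calc 2 ^ (i + 1) * M m n = 2 * (2 ^ i * M m n) := by ring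
      _ ≤ m (n + i) * M m (n + i) := Nat.mul_le_mul (hm2 _) ih
      _ = M m (n + (i + 1)) := rfl

lemma M_pos (hm : ∀ k, 0 < m k) (n : ℕ) : 0 < M m n := by
  induction n with
  | zero => exact Nat.one_pos
  | succ n ih => exact Nat.mul_pos (hm n) ih

lemma M_monotone (hm : ∀ k, 0 < m k) : Monotone (M m) :=
  monotone_nat_of_le_succ fun n => Nat.le_mul_of_pos_left _ (hm n)

lemma M_rpow_neg_le (hm2 : ∀ k, 2 ≤ m k) {γ : ℝ} (hγ : 0 ≤ γ) {n i j : ℕ} (hj : n + i ≤ j) :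
    (M m j : ℝ) ^ (-γ) ≤ (M m n : ℝ) ^ (-γ) * ((2 : ℝ) ^ (-γ)) ^ i := by
  have hm : ∀ k, 0 < m k := fun k => two_pos.trans_le (hm2 k)
  have hMn : (0 : ℝ) < M m n := by exact_mod_cast M_pos hm n
  have hMj : (2 : ℝ) ^ i * M m n ≤ M m j := by
    exact_mod_cast (two_pow_mul_M_le hm2 n i).trans (M_monotone hm hj)
  calc (M m j : ℝ) ^ (-γ) ≤ ((2 : ℝ) ^ i * M m n) ^ (-γ) :=
        Real.rpow_le_rpow_of_nonpos (by positivity) hMj (neg_nonpos.2 hγ)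
    _ = (M m n : ℝ) ^ (-γ) * ((2 : ℝ) ^ (-γ)) ^ i := by
        rw [Real.mul_rpow (by positivity) hMn.le, Real.rpow_pow_comm zero_le_two, mul_comm]

lemma two_rpow_neg_lt_one {γ : ℝ} (hγ : 0 < γ) : (2 : ℝ) ^ (-γ) < 1 :=
  Real.rpow_lt_one_of_one_lt_of_neg one_lt_two (neg_neg_of_pos hγ)

lemma norm_rad (k : ℕ) (x : G m) : ‖rad m k x‖ = 1 := by
  have h : 2 * Real.pi * Complex.I * ((x k).val : ℂ) / (m k : ℂ)
      = ((2 * Real.pi * (x k).val / m k : ℝ) : ℂ) * Complex.I := by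
    push_cast
    ring
  rw [rad, h, Complex.norm_exp_ofReal_mul_I]

lemma rad_sub_of_apply_eq_zero {k : ℕ} (x : G m) {u : G m} (hu : u k = 0) :
    rad m k (x - u) = rad m k x := by
  simp only [rad, Pi.sub_apply, hu, sub_zero]

lemma norm_tsum_le_of_eq_zero_of_norm_le_geometric {E : Type*} [SeminormedAddCommGroup E]
    {d : ℕ → E} {k : ℕ} {C r : ℝ} (hr0 : 0 ≤ r) (hr1 : r < 1) (hzero : ∀ j < k, d j = 0)
    (hle : ∀ i, ‖d (i + k)‖ ≤ C * r ^ i) : ‖∑' j, d j‖ ≤ C * (1 - r)⁻¹ := by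
  have hsupp : Function.support d ⊆ Set.range (· + k) := fun j hj =>
    ⟨j - k, Nat.sub_add_cancel (not_lt.1 fun hjk => hj (hzero j hjk))⟩
  rw [← (add_left_injective k).tsum_eq hsupp]
  exact tsum_of_norm_bounded ((hasSum_geometric_of_lt_one hr0 hr1).mul_left C) hle

def f₀Term (m : ℕ → ℕ) (γ : ℝ) (j : ℕ) (z : G m × G m) : ℂ :=
  (((M m (j + 1) : ℝ) ^ (-γ) : ℝ) : ℂ) * rad m (j + 1) z.1 * rad m (j + 1) z.2

lemma norm_f₀Term (γ : ℝ) (j : ℕ) (z : G m × G m) :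
    ‖f₀Term m γ j z‖ = (M m (j + 1) : ℝ) ^ (-γ) := by
  have hM : (0 : ℝ) ≤ M m (j + 1) := Nat.cast_nonneg _
  simp only [f₀Term, norm_mul, norm_rad, Complex.norm_real, Real.norm_eq_abs, mul_one,
    abs_of_nonneg (Real.rpow_nonneg hM _)]

lemma f₀Term_sub_of_mem_I {γ : ℝ} {n j : ℕ} {u v : G m} (hu : u ∈ I m n) (hv : v ∈ I m n)
    (hj : j + 1 < n) (z : G m × G m) : f₀Term m γ j (z.1 - u, z.2 - v) = f₀Term m γ j z := by
  simp only [f₀Term, rad_sub_of_apply_eq_zero _ (hu _ hj), rad_sub_of_apply_eq_zero _ (hv _ hj)]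

lemma summable_f₀Term (hm2 : ∀ k, 2 ≤ m k) {γ : ℝ} (hγ : 0 < γ) (z : G m × G m) :
    Summable (f₀Term m γ · z) := by
  refine (summable_geometric_of_lt_one (by positivity) (two_rpow_neg_lt_one hγ)).of_norm_bounded
    fun j => ?_
  simpa [norm_f₀Term, M] using M_rpow_neg_le hm2 hγ.le (n := 0) (i := j) (j := j + 1) (by omega)

lemma norm_tsum_f₀Term_sub_le (hm2 : ∀ k, 2 ≤ m k) {γ : ℝ} (hγ : 0 < γ) {n : ℕ} {u v : G m}
    (hu : u ∈ I m n) (hv : v ∈ I m n) (z : G m × G m) :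
    ‖∑' j, f₀Term m γ j (z.1 - u, z.2 - v) - ∑' j, f₀Term m γ j z‖
      ≤ 2 * (M m n : ℝ) ^ (-γ) * (1 - (2 : ℝ) ^ (-γ))⁻¹ := by
  rw [← (summable_f₀Term hm2 hγ _).tsum_sub (summable_f₀Term hm2 hγ z)]
  refine norm_tsum_le_of_eq_zero_of_norm_le_geometric (k := n - 1) (by positivity)
    (two_rpow_neg_lt_one hγ)
    (fun j hj => sub_eq_zero.2 (f₀Term_sub_of_mem_I hu hv (by omega) z)) fun i => ?_
  calc _ ≤ ‖f₀Term m γ (i + (n - 1)) (z.1 - u, z.2 - v)‖ + ‖f₀Term m γ (i + (n - 1)) z‖ :=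
        norm_sub_le _ _
    _ = 2 * (M m (i + (n - 1) + 1) : ℝ) ^ (-γ) := by rw [norm_f₀Term, norm_f₀Term]; ring
    _ ≤ 2 * ((M m n : ℝ) ^ (-γ) * ((2 : ℝ) ^ (-γ)) ^ i) := by
        gcongr
        exact M_rpow_neg_le hm2 hγ.le (by omega)
    _ = _ := by ring

lemma omegaC_le_ofReal {f : G m × G m → ℂ} {n : ℕ} {B : ℝ}
    (h : ∀ u ∈ I m n, ∀ v ∈ I m n, ∀ z, ‖f (z.1 - u, z.2 - v) - f z‖ ≤ B) :
    omegaC m f n ≤ ENNReal.ofReal B :=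
  iSup₂_le fun u hu => iSup₂_le fun v hv => iSup_le fun z => by
    rw [← enorm_eq_nnnorm, ← ofReal_norm]
    exact ENNReal.ofReal_le_ofReal (h u hu v hv z)

theorem statement_15_general (m : ℕ → ℕ) (hm2 : ∀ k, 2 ≤ m k)
    (α β : ℝ) (hα : α ∈ Set.Ioo (0 : ℝ) 1) (hβ : β ∈ Set.Ioo (0 : ℝ) 1) (f₀ : G m × G m → ℂ)
    (hf₀ : ∀ z : G m × G m, f₀ z = ∑' j : ℕ,
      (((M m (j + 1) : ℝ) ^ (-(α + β)) : ℝ) : ℂ) * rad m (j + 1) z.1 * rad m (j + 1) z.2) :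
    ∃ C : ℝ≥0, 0 < C ∧ ∀ n : ℕ,
      omegaC m f₀ n ≤ C * ((M m n : ℝ≥0∞)⁻¹) ^ (α + β) := by
  have hγ : 0 < α + β := add_pos hα.1 hβ.1
  set C : ℝ := 2 * (1 - (2 : ℝ) ^ (-(α + β)))⁻¹
  have hC : 0 < C := by have := sub_pos.2 (two_rpow_neg_lt_one hγ); positivity
  refine ⟨C.toNNReal, Real.toNNReal_pos.2 hC, fun n => ?_⟩
  have hM : (0 : ℝ) < M m n := by exact_mod_cast M_pos (fun k => two_pos.trans_le (hm2 k)) n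
  calc omegaC m f₀ n ≤ ENNReal.ofReal (C * (M m n : ℝ) ^ (-(α + β))) :=
        omegaC_le_ofReal fun u hu v hv z => by
          rw [hf₀, hf₀]
          exact (norm_tsum_f₀Term_sub_le hm2 hγ hu hv z).trans_eq (by ring)
    _ = C.toNNReal * ((M m n : ℝ≥0∞)⁻¹) ^ (α + β) := by
        rw [ENNReal.ofReal_mul hC.le, ENNReal.inv_rpow, ← ENNReal.rpow_neg,
          ← ENNReal.ofReal_natCast, ENNReal.ofReal_rpow_of_pos hM]
        rfl

theorem statement_15 (m : ℕ → ℕ) (hm2 : ∀ k, 2 ≤ m k) (hmbd : ∃ B, ∀ k, m k ≤ B)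
    (α β : ℝ) (hα : α ∈ Set.Ioo (0 : ℝ) 1) (hβ : β ∈ Set.Ioo (0 : ℝ) 1) (f₀ : G m × G m → ℂ)
    (hf₀ : ∀ z : G m × G m, f₀ z = ∑' j : ℕ,
      (((M m (j + 1) : ℝ) ^ (-(α + β)) : ℝ) : ℂ) * rad m (j + 1) z.1 * rad m (j + 1) z.2) :
    ∃ C : ℝ≥0, 0 < C ∧ ∀ n : ℕ,
      omegaC m f₀ n ≤ C * ((M m n : ℝ≥0∞)⁻¹) ^ (α + β) :=
  statement_15_general m hm2 α β hα hβ f₀ hf₀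

end Vilenkin
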